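/- arXiv:math/9912104 — 2 statements merged into one kernel-verified Lean document; each statement's English description precedes it below -/
import Mathlib

section
/- Let Γ be a finite group acting linearly on ℂ² with coordinates (x,y), and let Γₙ = Γ ≀ Sₙ act on ℂ[x₁,y₁,…,xₙ,yₙ]. Then the algebra of invariants ℂ[x₁,y₁,…,xₙ,yₙ]^{Γₙ} is generated by the polarized power sums f̃(𝐱,𝐲) = f(x₁,y₁) + f(x₂,y₂) + … + f(xₙ,yₙ), where f ranges over any linear basis of ℂ[x,y]^Γ. -/
open Equiv

/-- The permutation action of `Equiv.Perm (Fin n)` on `Fin n → Γ` by automorphisms: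
`σ` sends `(g₁,…,gₙ)` to `(g_{σ⁻¹(1)},…,g_{σ⁻¹(n)})`. -/
def wreathAut (n : ℕ) (Γ : Type*) [Group Γ] : Equiv.Perm (Fin n) →* MulAut (Fin n → Γ) where
  toFun σ :=
    { toFun := fun g i => g (σ⁻¹ i)
      invFun := fun g i => g (σ i)
      left_inv := fun g => by funext i; simp
      right_inv := fun g => by funext i; simp
      map_mul' := fun a b => rfl }
  map_one' := by ext g i; simp
  map_mul' := fun a b => by ext g i; simp

/-- The wreath product `Γₙ = Γ ≀ Sₙ = Γⁿ ⋊ Sₙ`. -/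
abbrev Wreath (n : ℕ) (Γ : Type*) [Group Γ] :=
  (Fin n → Γ) ⋊[wreathAut n Γ] Equiv.Perm (Fin n)

noncomputable instance instFintypeWreath (n : ℕ) (Γ : Type*) [Group Γ] [Fintype Γ] :
    Fintype (Wreath n Γ) :=
  Fintype.ofEquiv ((Fin n → Γ) × Equiv.Perm (Fin n))
    { toFun := fun p => ⟨p.1, p.2⟩
      invFun := fun x => (x.left, x.right)
      left_inv := fun _ => rfl
      right_inv := fun _ => rfl }

/-- The cycle-product of `g = (g₁,…,gₙ)` along a cycle `c`: for the cycle
`(i₁ i₂ … i_k)` starting at the minimal element `i₁` of the support, the product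
`g_{i_k} g_{i_{k-1}} ⋯ g_{i₁}`, well defined up to conjugacy in `Γ`. -/
noncomputable def cycleProd {n : ℕ} {Γ : Type*} [Group Γ] (g : Fin n → Γ)
    (c : Equiv.Perm (Fin n)) : Γ :=
  if h : c.support.Nonempty then
    (((List.range c.support.card).reverse).map fun j => g ((c ^ j) (c.support.min' h))).prod
  else 1

open MvPolynomial

variable {Γ : Type*} [Group Γ]

/-- The substitution action of `γ ∈ Γ ⊆ GL₂(ℂ)` on `ℂ[x,y] = ℂ[x₀,x₁]`:
the variable `x_j` is sent to the linear form `∑ₗ (ρ γ)_{j l} x_l`. -/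
noncomputable def act2 (ρ : Γ →* Matrix.GeneralLinearGroup (Fin 2) ℂ) (γ : Γ) :
    MvPolynomial (Fin 2) ℂ →ₐ[ℂ] MvPolynomial (Fin 2) ℂ :=
  aeval fun j => ∑ l, C ((ρ γ : Matrix (Fin 2) (Fin 2) ℂ) j l) * X l

/-- The substitution action of the wreath product `Γₙ = Γ ≀ Sₙ` on
`ℂ[x₁,y₁,…,xₙ,yₙ]`, the polynomial ring in the variables indexed by
`Fin n × Fin 2`: the `i`-th copy of `Γ` acts linearly on the pair of variables
`(x_i, y_i)` and `Sₙ` permutes the `n` pairs of variables. -/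
noncomputable def actW (n : ℕ) (ρ : Γ →* Matrix.GeneralLinearGroup (Fin 2) ℂ)
    (x : Wreath n Γ) :
    MvPolynomial (Fin n × Fin 2) ℂ →ₐ[ℂ] MvPolynomial (Fin n × Fin 2) ℂ :=
  aeval fun p => ∑ l, C ((ρ (x.left p.1) : Matrix (Fin 2) (Fin 2) ℂ) p.2 l)
    * X (x.right⁻¹ p.1, l)

/-- The polarization `f̃(𝐱,𝐲) = f(x₁,y₁) + … + f(xₙ,yₙ)` of `f ∈ ℂ[x,y]`. -/
noncomputable def polarize (n : ℕ) (f : MvPolynomial (Fin 2) ℂ) :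
    MvPolynomial (Fin n × Fin 2) ℂ :=
  ∑ i : Fin n, rename (fun j => (i, j)) f
section Aux

variable {Γ : Type*} [Group Γ]

noncomputable def ren {n : ℕ} (i : Fin n) :
    MvPolynomial (Fin 2) ℂ →ₐ[ℂ] MvPolynomial (Fin n × Fin 2) ℂ :=
  rename fun j => (i, j)

lemma polarize_eq (n : ℕ) (f : MvPolynomial (Fin 2) ℂ) :
    polarize n f = ∑ i : Fin n, ren i f := rfl

lemma actW_ren (n : ℕ) (ρ : Γ →* Matrix.GeneralLinearGroup (Fin 2) ℂ)
    (x : Wreath n Γ) (i : Fin n) (q : MvPolynomial (Fin 2) ℂ) :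
    actW n ρ x (ren i q) = ren (x.right⁻¹ i) (act2 ρ (x.left i) q) := by
  show actW n ρ x (rename (fun j => (i, j)) q) = _
  rw [actW, aeval_rename]
  show _ = (ren (x.right⁻¹ i)).comp (act2 ρ (x.left i)) q
  rw [act2, comp_aeval]
  have : ((fun p : Fin n × Fin 2 =>
        ∑ l, C ((ρ (x.left p.1) : Matrix (Fin 2) (Fin 2) ℂ) p.2 l) * X (x.right⁻¹ p.1, l))
        ∘ fun j => (i, j))
      = fun j => ren (x.right⁻¹ i)
          (∑ l, C ((ρ (x.left i) : Matrix (Fin 2) (Fin 2) ℂ) j l) * X l) := by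
    funext j
    simp [ren, Function.comp]
  rw [this]

lemma act2_act2 (ρ : Γ →* Matrix.GeneralLinearGroup (Fin 2) ℂ) (γ γ' : Γ)
    (p : MvPolynomial (Fin 2) ℂ) :
    act2 ρ γ (act2 ρ γ' p) = act2 ρ (γ' * γ) p := by
  show (act2 ρ γ).comp (act2 ρ γ') p = _
  rw [act2, act2, act2, comp_aeval]
  have : (fun j => (aeval fun j' => ∑ l, C ((ρ γ : Matrix (Fin 2) (Fin 2) ℂ) j' l) * X l)
        (∑ l, C ((ρ γ' : Matrix (Fin 2) (Fin 2) ℂ) j l) * X l))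
      = fun j => ∑ l, C ((ρ (γ' * γ) : Matrix (Fin 2) (Fin 2) ℂ) j l) * X l := by
    funext j
    simp only [map_sum, map_mul, aeval_C, aeval_X, Finset.mul_sum, map_mul ρ]
    rw [Finset.sum_comm]
    refine Finset.sum_congr rfl fun m _ => ?_
    rw [Units.val_mul, Matrix.mul_apply]
    simp only [MvPolynomial.algebraMap_eq, map_sum, Finset.sum_mul, C_mul, mul_assoc]
  rw [this]

end Aux
lemma sum_prod_fun {R : Type*} [CommSemiring R] {G : Type*} [Fintype G] :
    ∀ (k : ℕ) (t : Fin k → G → R),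
      ∑ g : Fin k → G, ∏ i, t i (g i) = ∏ i, ∑ γ, t i γ := by
  intro k
  induction k with
  | zero => intro t; simp
  | succ k ih =>
      intro t
      rw [← Equiv.sum_comp (Fin.consEquiv fun _ : Fin (k+1) => G)
        (fun g => ∏ i, t i (g i))]
      rw [Fintype.sum_prod_type]
      have : ∀ (γ : G) (g : Fin k → G),
          ∏ i, t i ((Fin.consEquiv fun _ : Fin (k+1) => G) (γ, g) i)
            = t 0 γ * ∏ i, t i.succ (g i) := by
        intro γ g
        rw [Fin.prod_univ_succ]
        simp [Fin.consEquiv]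
      simp only [this]
      rw [← Finset.sum_mul_sum]
      · rw [ih fun i γ => t i.succ γ, Fin.prod_univ_succ]
noncomputable def pureSet (n : ℕ) : Set (MvPolynomial (Fin n × Fin 2) ℂ) :=
  Set.range fun q : Fin n → MvPolynomial (Fin 2) ℂ => ∏ i, ren i (q i)

lemma pure_mul_X (n : ℕ) (q : Fin n → MvPolynomial (Fin 2) ℂ) (v : Fin n × Fin 2) :
    (∏ i, ren i (q i)) * X v ∈ pureSet n := by
  refine ⟨Function.update q v.1 (q v.1 * X v.2), ?_⟩
  have h1 : (fun i => ren i (Function.update q v.1 (q v.1 * X v.2) i))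
      = Function.update (fun i => ren i (q i)) v.1 (ren v.1 (q v.1 * X v.2)) := by
    funext i
    by_cases hi : i = v.1
    · subst hi; simp
    · simp [Function.update_of_ne hi]
  show (∏ i, ren i (Function.update q v.1 (q v.1 * X v.2) i)) = _
  rw [h1, Finset.prod_update_of_mem (Finset.mem_univ v.1)]
  rw [← Finset.mul_prod_erase Finset.univ (fun i => ren i (q i)) (Finset.mem_univ v.1)]
  rw [Finset.sdiff_singleton_eq_erase]
  rw [map_mul]
  have : ren v.1 (X v.2) = X v := by
    show rename (fun j => (v.1, j)) (X v.2) = X v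
    rw [rename_X]
  rw [this]
  ring

lemma span_pure (n : ℕ) (F : MvPolynomial (Fin n × Fin 2) ℂ) :
    F ∈ Submodule.span ℂ (pureSet n) := by
  induction F using MvPolynomial.induction_on with
  | C a =>
      have h1 : (1 : MvPolynomial (Fin n × Fin 2) ℂ) ∈ pureSet n := ⟨1, by simp⟩
      have := Submodule.smul_mem (Submodule.span ℂ (pureSet n)) a
        (Submodule.subset_span h1)
      simpa [MvPolynomial.smul_eq_C_mul] using this
  | add p q hp hq => exact Submodule.add_mem _ hp hq
  | mul_X p v hp =>
      refine Submodule.span_induction ?_ ?_ ?_ ?_ hp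
      · rintro x ⟨q, rfl⟩
        exact Submodule.subset_span (pure_mul_X n q v)
      · simp
      · intro a b _ _ ha hb
        rw [add_mul]; exact Submodule.add_mem _ ha hb
      · intro c a _ ha
        rw [smul_mul_assoc]; exact Submodule.smul_mem _ c ha
noncomputable def TT (n k : ℕ) (h : Fin k → MvPolynomial (Fin 2) ℂ) :
    MvPolynomial (Fin n × Fin 2) ℂ :=
  ∑ f ∈ Finset.univ.filter (fun f : Fin k → Fin n => Function.Injective f),
    ∏ i, ren (f i) (h i)

lemma snoc_injective {k n : ℕ} {f : Fin k → Fin n} {j : Fin n}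
    (hf : Function.Injective f) (hj : ∀ i, f i ≠ j) :
    Function.Injective (Fin.snoc f j : Fin (k+1) → Fin n) := by
  intro x y hxy
  induction x using Fin.lastCases with
  | last =>
      induction y using Fin.lastCases with
      | last => rfl
      | cast y =>
          rw [Fin.snoc_last, Fin.snoc_castSucc] at hxy
          exact absurd hxy.symm (hj y)
  | cast x =>
      induction y using Fin.lastCases with
      | last =>
          rw [Fin.snoc_last, Fin.snoc_castSucc] at hxy
          exact absurd hxy (hj x)
      | cast y =>
          rw [Fin.snoc_castSucc, Fin.snoc_castSucc] at hxy
          exact congrArg Fin.castSucc (hf hxy)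

lemma TT_succ (n k : ℕ) (h : Fin (k+1) → MvPolynomial (Fin 2) ℂ) :
    TT n (k+1) h = polarize n (h (Fin.last k)) * TT n k (fun i => h i.castSucc)
      - ∑ i₀ : Fin k, TT n k (Function.update (fun i => h i.castSucc) i₀
          (h i₀.castSucc * h (Fin.last k))) := by
  rw [eq_sub_iff_add_eq]
  set a := h (Fin.last k) with ha
  set h' : Fin k → MvPolynomial (Fin 2) ℂ := fun i => h i.castSucc with hh'
  -- RHS expansion
  conv_rhs => rw [polarize_eq, TT, Finset.sum_mul_sum, Finset.sum_comm]
  have split : ∀ f ∈ Finset.univ.filter (fun f : Fin k → Fin n => Function.Injective f),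
      ∑ j : Fin n, ren j a * ∏ i, ren (f i) (h' i)
        = (∑ i₀ : Fin k, ∏ i, ren (f i)
            (Function.update h' i₀ (h' i₀ * a) i))
          + ∑ j ∈ Finset.univ.filter (fun j => ¬ j ∈ Finset.image f Finset.univ),
              ren j a * ∏ i, ren (f i) (h' i) := by
    intro f hf
    have hfi : Function.Injective f := (Finset.mem_filter.mp hf).2
    rw [← Finset.sum_filter_add_sum_filter_not Finset.univ
      (fun j => j ∈ Finset.image f Finset.univ)]
    congr 1
    rw [Finset.filter_mem_eq_inter, Finset.univ_inter]
    rw [Finset.sum_image (fun x _ y _ hxy => hfi hxy)]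
    refine Finset.sum_congr rfl fun i₀ _ => ?_
    have h1 : (fun i => ren (f i) (Function.update h' i₀ (h' i₀ * a) i))
        = Function.update (fun i => ren (f i) (h' i)) i₀ (ren (f i₀) (h' i₀ * a)) := by
      funext i
      by_cases hi : i = i₀
      · subst hi; simp
      · simp [Function.update_of_ne hi]
    rw [h1, Finset.prod_update_of_mem (Finset.mem_univ i₀),
      ← Finset.mul_prod_erase Finset.univ (fun i => ren (f i) (h' i)) (Finset.mem_univ i₀),
      Finset.sdiff_singleton_eq_erase, map_mul]
    ring
  conv_rhs => rw [Finset.sum_congr rfl split, Finset.sum_add_distrib]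
  rw [add_comm]
  congr 1
  · -- ∑ i₀ TT = ∑ f ∑ i₀
    rw [Finset.sum_comm]
    refine Finset.sum_congr rfl fun f hf => ?_
    rfl
  · -- TT (k+1) is the second piece
    rw [TT, Finset.sum_sigma']
    symm
    refine Finset.sum_bij' (fun p _ => (Fin.snoc p.1 p.2 : Fin (k+1) → Fin n))
      (fun F _ => ⟨fun i => F i.castSucc, F (Fin.last k)⟩) ?_ ?_ ?_ ?_ ?_
    · rintro ⟨f, j⟩ hp
      rw [Finset.mem_sigma] at hp
      obtain ⟨hf, hj⟩ := hp
      rw [Finset.mem_filter] at hf hj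
      refine Finset.mem_filter.mpr ⟨Finset.mem_univ _, snoc_injective hf.2 ?_⟩
      intro i hij
      exact hj.2 (Finset.mem_image.mpr ⟨i, Finset.mem_univ i, hij⟩)
    · intro F hF
      rw [Finset.mem_filter] at hF
      have hFi := hF.2
      refine Finset.mem_sigma.mpr ⟨?_, ?_⟩
      · exact Finset.mem_filter.mpr ⟨Finset.mem_univ _,
          fun x y hxy => Fin.castSucc_injective k (hFi hxy)⟩
      · refine Finset.mem_filter.mpr ⟨Finset.mem_univ _, ?_⟩
        intro hmem
        obtain ⟨i, _, hi⟩ := Finset.mem_image.mp hmem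
        have := hFi hi
        exact absurd this (Fin.ne_last_of_lt (Fin.castSucc_lt_last i))
    · rintro ⟨f, j⟩ _
      refine Sigma.ext ?_ ?_
      · funext i; simp
      · simp
    · intro F _
      funext i
      induction i using Fin.lastCases with
      | last => simp
      | cast i => simp
    · rintro ⟨f, j⟩ _
      rw [Fin.prod_univ_castSucc]
      simp only [Fin.snoc_castSucc, Fin.snoc_last]
      ring
section Main

variable {Γ : Type*} [Group Γ] (n : ℕ) (ρ : Γ →* Matrix.GeneralLinearGroup (Fin 2) ℂ)
  (B : Set (MvPolynomial (Fin 2) ℂ))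
  (hBspan : (Submodule.span ℂ B : Set (MvPolynomial (Fin 2) ℂ)) =
      {f | ∀ γ : Γ, act2 ρ γ f = f})

include hBspan in
lemma inv_mem_spanB (f : MvPolynomial (Fin 2) ℂ) (hf : ∀ γ : Γ, act2 ρ γ f = f) :
    f ∈ Submodule.span ℂ B := by
  have : f ∈ (Submodule.span ℂ B : Set (MvPolynomial (Fin 2) ℂ)) := by rw [hBspan]; exact hf
  exact this

include hBspan in
lemma spanB_inv (f : MvPolynomial (Fin 2) ℂ) (hf : f ∈ Submodule.span ℂ B) (γ : Γ) :
    act2 ρ γ f = f := by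
  have : f ∈ (Submodule.span ℂ B : Set (MvPolynomial (Fin 2) ℂ)) := hf
  rw [hBspan] at this
  exact this γ

include hBspan in
lemma polarize_mem_adjoin (f : MvPolynomial (Fin 2) ℂ) (hf : ∀ γ : Γ, act2 ρ γ f = f) :
    polarize n f ∈ Algebra.adjoin ℂ (polarize n '' B) := by
  have hfB := inv_mem_spanB ρ B hBspan f hf
  refine Submodule.span_induction ?_ ?_ ?_ ?_ hfB
  · intro b hb
    exact Algebra.subset_adjoin ⟨b, hb, rfl⟩
  · have : polarize n (0 : MvPolynomial (Fin 2) ℂ) = 0 := by simp [polarize_eq]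
    rw [this]; exact Subalgebra.zero_mem _
  · intro a b _ _ ha hb
    have : polarize n (a + b) = polarize n a + polarize n b := by
      simp [polarize_eq, Finset.sum_add_distrib]
    rw [this]; exact Subalgebra.add_mem _ ha hb
  · intro c a _ ha
    have : polarize n (c • a) = c • polarize n a := by
      simp [polarize_eq, Finset.smul_sum]
    rw [this]; exact Subalgebra.smul_mem _ ha c

include hBspan in
lemma TT_mem : ∀ (k : ℕ) (h : Fin k → MvPolynomial (Fin 2) ℂ),
    (∀ i, ∀ γ : Γ, act2 ρ γ (h i) = h i) →
    TT n k h ∈ Algebra.adjoin ℂ (polarize n '' B) := by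
  intro k
  induction k with
  | zero =>
      intro h _
      have : TT n 0 h = 1 := by
        rw [TT]
        simp only [Fin.prod_univ_zero, Finset.sum_const, nsmul_eq_mul, mul_one]
        have heq : Finset.filter (fun f : Fin 0 → Fin n => Function.Injective f)
            Finset.univ = Finset.univ :=
          Finset.filter_true_of_mem (fun f _ => fun x => x.elim0)
        rw [heq]
        simp [Finset.univ_unique]
      rw [this]; exact Subalgebra.one_mem _
  | succ k ih =>
      intro h hh
      rw [TT_succ]
      refine Subalgebra.sub_mem _ (Subalgebra.mul_mem _ ?_ ?_) (Subalgebra.sum_mem _ ?_)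
      · exact polarize_mem_adjoin n ρ B hBspan _ (hh _)
      · exact ih _ (fun i => hh _)
      · intro i₀ _
        refine ih _ ?_
        intro i γ
        by_cases hi : i = i₀
        · subst hi
          rw [Function.update_self, map_mul, hh, hh]
        · rw [Function.update_of_ne hi]
          exact hh _ γ

lemma sum_perm_eq_TT (h : Fin n → MvPolynomial (Fin 2) ℂ) :
    ∑ σ : Equiv.Perm (Fin n), ∏ i, ren (σ i) (h i) = TT n n h := by
  rw [TT]
  refine Finset.sum_bij' (fun σ _ => (σ : Fin n → Fin n))
    (fun f hf => Equiv.ofBijective f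
      (Finite.injective_iff_bijective.mp (Finset.mem_filter.mp hf).2)) ?_ ?_ ?_ ?_ ?_
  · intro σ _
    exact Finset.mem_filter.mpr ⟨Finset.mem_univ _, σ.injective⟩
  · intro f _; exact Finset.mem_univ _
  · intro σ _; exact Equiv.ext fun x => rfl
  · intro f _; rfl
  · intro σ _; rfl

end Main
section Final

variable {Γ : Type*} [Group Γ]

def wreathEquiv (n : ℕ) (Γ : Type*) [Group Γ] :
    ((Fin n → Γ) × Equiv.Perm (Fin n)) ≃ Wreath n Γ where
  toFun := fun p => ⟨p.1, p.2⟩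
  invFun := fun x => (x.left, x.right)
  left_inv := fun _ => rfl
  right_inv := fun _ => rfl

lemma sq_inv [Fintype Γ] (ρ : Γ →* Matrix.GeneralLinearGroup (Fin 2) ℂ)
    (q : MvPolynomial (Fin 2) ℂ) (γ : Γ) :
    act2 ρ γ (∑ γ' : Γ, act2 ρ γ' q) = ∑ γ' : Γ, act2 ρ γ' q := by
  rw [map_sum]
  simp only [act2_act2]
  exact Equiv.sum_comp (Equiv.mulRight γ) (fun γ' => act2 ρ γ' q)

lemma step1 [Fintype Γ] (n : ℕ) (ρ : Γ →* Matrix.GeneralLinearGroup (Fin 2) ℂ)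
    (q : Fin n → MvPolynomial (Fin 2) ℂ) (σ : Equiv.Perm (Fin n)) (g : Fin n → Γ) :
    actW n ρ (wreathEquiv n Γ (g, σ)) (∏ i, ren i (q i))
      = ∏ i, ren i (act2 ρ (g (σ i)) (q (σ i))) := by
  rw [map_prod]
  have h1 : ∀ i : Fin n, actW n ρ (wreathEquiv n Γ (g, σ)) (ren i (q i))
      = (fun j => ren j (act2 ρ (g (σ j)) (q (σ j)))) (σ⁻¹ i) := by
    intro i
    rw [actW_ren]
    show ren (σ⁻¹ i) (act2 ρ (g i) (q i))
      = ren (σ⁻¹ i) (act2 ρ (g (σ (σ⁻¹ i))) (q (σ (σ⁻¹ i))))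
    rw [← Equiv.Perm.mul_apply, mul_inv_cancel, Equiv.Perm.one_apply]
  rw [Finset.prod_congr rfl fun i _ => h1 i]
  exact Equiv.prod_comp σ⁻¹ (fun j => ren j (act2 ρ (g (σ j)) (q (σ j))))

lemma step2 [Fintype Γ] (n : ℕ) (ρ : Γ →* Matrix.GeneralLinearGroup (Fin 2) ℂ)
    (q : Fin n → MvPolynomial (Fin 2) ℂ) (σ : Equiv.Perm (Fin n)) :
    ∑ g : Fin n → Γ, ∏ i, ren i (act2 ρ (g (σ i)) (q (σ i)))
      = ∏ i, ren i (∑ γ : Γ, act2 ρ γ (q (σ i))) := by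
  have hbij : Function.Bijective (fun g : Fin n → Γ => g ∘ ⇑σ) :=
    Function.bijective_iff_has_inverse.mpr
      ⟨fun g => g ∘ ⇑σ⁻¹,
        fun g => funext fun i => by simp,
        fun g => funext fun i => by simp⟩
  rw [Fintype.sum_bijective _ hbij
    (fun g => ∏ i, ren i (act2 ρ (g (σ i)) (q (σ i))))
    (fun g => ∏ i, ren i (act2 ρ (g i) (q (σ i)))) (fun g => rfl)]
  rw [sum_prod_fun n (fun i γ => ren i (act2 ρ γ (q (σ i))))]
  exact Finset.prod_congr rfl fun i _ => (map_sum (ren i) _ _).symm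

end Final
section Final2

variable {Γ : Type*} [Group Γ]

lemma avg_pure_mem [Fintype Γ] (n : ℕ) (ρ : Γ →* Matrix.GeneralLinearGroup (Fin 2) ℂ)
    (B : Set (MvPolynomial (Fin 2) ℂ))
    (hBspan : (Submodule.span ℂ B : Set (MvPolynomial (Fin 2) ℂ)) =
      {f | ∀ γ : Γ, act2 ρ γ f = f})
    (q : Fin n → MvPolynomial (Fin 2) ℂ) :
    ∑ x : Wreath n Γ, actW n ρ x (∏ i, ren i (q i))
      ∈ Algebra.adjoin ℂ (polarize n '' B) := by
  have key : ∑ x : Wreath n Γ, actW n ρ x (∏ i, ren i (q i))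
      = ∑ σ : Equiv.Perm (Fin n), ∏ j, ren (σ j) (∑ γ : Γ, act2 ρ γ (q j)) := by
    rw [← Equiv.sum_comp (wreathEquiv n Γ) (fun x => actW n ρ x (∏ i, ren i (q i))),
      Fintype.sum_prod_type, Finset.sum_comm]
    calc ∑ σ : Equiv.Perm (Fin n), ∑ g : Fin n → Γ,
          actW n ρ (wreathEquiv n Γ (g, σ)) (∏ i, ren i (q i))
        = ∑ σ : Equiv.Perm (Fin n), ∏ i, ren i (∑ γ : Γ, act2 ρ γ (q (σ i))) := by
          refine Finset.sum_congr rfl fun σ _ => ?_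
          rw [Finset.sum_congr rfl fun g _ => step1 n ρ q σ g, step2 n ρ q σ]
      _ = ∑ σ : Equiv.Perm (Fin n), ∏ j, ren (σ⁻¹ j) (∑ γ : Γ, act2 ρ γ (q j)) := by
          refine Finset.sum_congr rfl fun σ _ => ?_
          have h2 : ∀ i : Fin n, ren i (∑ γ : Γ, act2 ρ γ (q (σ i)))
              = (fun j => ren (σ⁻¹ j) (∑ γ : Γ, act2 ρ γ (q j))) (σ i) := by
            intro i
            show _ = ren (σ⁻¹ (σ i)) (∑ γ : Γ, act2 ρ γ (q (σ i)))
            rw [← Equiv.Perm.mul_apply, inv_mul_cancel, Equiv.Perm.one_apply]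
          rw [Finset.prod_congr rfl fun i _ => h2 i]
          exact Equiv.prod_comp σ (fun j => ren (σ⁻¹ j) (∑ γ : Γ, act2 ρ γ (q j)))
      _ = ∑ σ : Equiv.Perm (Fin n), ∏ j, ren (σ j) (∑ γ : Γ, act2 ρ γ (q j)) :=
          Equiv.sum_comp (Equiv.inv (Equiv.Perm (Fin n)))
            (fun σ => ∏ j, ren (σ j) (∑ γ : Γ, act2 ρ γ (q j)))
  rw [key, sum_perm_eq_TT]
  exact TT_mem n ρ B hBspan n _ (fun i γ => sq_inv ρ (q i) γ)

end Final2

/-- Weyl's theorem, generalized: if `Γ ⊆ GL₂(ℂ)` is finite and `B` is a linear basis of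
the invariant algebra `ℂ[x,y]^Γ`, then the algebra of invariants
`ℂ[x₁,y₁,…,xₙ,yₙ]^{Γₙ}` is generated by the polarized power sums
`f̃(𝐱,𝐲) = f(x₁,y₁) + … + f(xₙ,yₙ)`, `f ∈ B`. -/
theorem wreath_invariants_generated_by_polarizations [Fintype Γ] (n : ℕ)
    (ρ : Γ →* Matrix.GeneralLinearGroup (Fin 2) ℂ) (hρ : Function.Injective ρ)
    (B : Set (MvPolynomial (Fin 2) ℂ))
    (hBspan : (Submodule.span ℂ B : Set (MvPolynomial (Fin 2) ℂ)) =
      {f | ∀ γ : Γ, act2 ρ γ f = f})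
    (hBindep : LinearIndependent ℂ ((↑) : B → MvPolynomial (Fin 2) ℂ)) :
    ∀ F : MvPolynomial (Fin n × Fin 2) ℂ,
      (∀ x : Wreath n Γ, actW n ρ x F = F) ↔
        F ∈ Algebra.adjoin ℂ (polarize n '' B) := by
  intro F
  constructor
  · intro hF
    have hcard : ((Fintype.card (Wreath n Γ) : ℂ)) ≠ 0 :=
      Nat.cast_ne_zero.mpr Fintype.card_ne_zero
    have havg : (Fintype.card (Wreath n Γ) : ℂ) • F = ∑ x : Wreath n Γ, actW n ρ x F := by
      rw [Finset.sum_congr rfl fun x _ => hF x, Finset.sum_const, Finset.card_univ,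
        Nat.cast_smul_eq_nsmul]
    have hsum : ∀ G : MvPolynomial (Fin n × Fin 2) ℂ, G ∈ Submodule.span ℂ (pureSet n) →
        (∑ x : Wreath n Γ, actW n ρ x G) ∈ Algebra.adjoin ℂ (polarize n '' B) := by
      intro G hG
      refine Submodule.span_induction ?_ ?_ ?_ ?_ hG
      · rintro _ ⟨q, rfl⟩
        exact avg_pure_mem n ρ B hBspan q
      · simpa using Subalgebra.zero_mem (Algebra.adjoin ℂ (polarize n '' B))
      · intro a b _ _ ha hb
        have h : ∑ x : Wreath n Γ, actW n ρ x (a + b)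
            = (∑ x : Wreath n Γ, actW n ρ x a) + ∑ x : Wreath n Γ, actW n ρ x b := by
          simp [map_add, Finset.sum_add_distrib]
        rw [h]; exact Subalgebra.add_mem _ ha hb
      · intro c a _ ha
        have h : ∑ x : Wreath n Γ, actW n ρ x (c • a)
            = c • ∑ x : Wreath n Γ, actW n ρ x a := by
          simp [Finset.smul_sum]
        rw [h]; exact Subalgebra.smul_mem _ ha c
    have hFeq : F = (Fintype.card (Wreath n Γ) : ℂ)⁻¹ • ∑ x : Wreath n Γ, actW n ρ x F := by
      rw [← havg, smul_smul, inv_mul_cancel₀ hcard, one_smul]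
    rw [hFeq]
    exact Subalgebra.smul_mem _ (hsum F (span_pure n F)) _
  · intro hF x
    refine Algebra.adjoin_induction ?_ ?_ ?_ ?_ hF
    · rintro _ ⟨f, hfB, rfl⟩
      have hf : ∀ γ : Γ, act2 ρ γ f = f :=
        spanB_inv ρ B hBspan f (Submodule.subset_span hfB)
      rw [polarize_eq, map_sum]
      have h3 : ∀ i, actW n ρ x (ren i f) = (fun j => ren j f) (x.right⁻¹ i) := by
        intro i; rw [actW_ren, hf]
      rw [Finset.sum_congr rfl fun i _ => h3 i]
      exact (Equiv.sum_comp x.right⁻¹ fun j => ren j f).trans (polarize_eq n f).symm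
    · intro c; exact AlgHom.commutes _ c
    · intro a b _ _ ha hb; rw [map_add, ha, hb]
    · intro a b _ _ ha hb; rw [map_mul, ha, hb]
end

section
/- Let Γ ⊆ GL_k(ℂ), let s = (1 2 … n) ∈ Sₙ be an n-cycle, α = (g,1,…,1) ∈ Γⁿ, and consider the element (α,s) of the wreath product Γₙ acting on ℂ^{kn} = (ℂ^k)ⁿ. If i is not divisible by n, then the trace of (α,s) acting on the i-th exterior power Λ^i(ℂ^{kn}) is zero. -/
open ExteriorAlgebra

theorem map_mem_exteriorPower {R M : Type*} [CommRing R] [AddCommGroup M]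
    [Module R M] (T : M →ₗ[R] M) (i : ℕ) {x : ExteriorAlgebra R M}
    (hx : x ∈ ⋀[R]^i M) : ExteriorAlgebra.map T x ∈ ⋀[R]^i M := by
  have hbase : Submodule.map (ExteriorAlgebra.map T).toLinearMap
      (LinearMap.range (ι R : M →ₗ[R] ExteriorAlgebra R M)) ≤
      LinearMap.range (ι R : M →ₗ[R] ExteriorAlgebra R M) := by
    rintro _ ⟨_, ⟨m, rfl⟩, rfl⟩
    exact ⟨T m, (map_apply_ι T m).symm⟩
  have key : ∀ j : ℕ,
      (Submodule.map (ExteriorAlgebra.map T).toLinearMap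
        (LinearMap.range (ι R : M →ₗ[R] ExteriorAlgebra R M))) ^ j ≤
      (LinearMap.range (ι R : M →ₗ[R] ExteriorAlgebra R M)) ^ j := by
    intro j
    induction j with
    | zero => simp
    | succ k ih =>
      rw [pow_succ, pow_succ]
      exact mul_le_mul' ih hbase
  have : ExteriorAlgebra.map T x ∈
      (Submodule.map (ExteriorAlgebra.map T).toLinearMap
        (LinearMap.range (ι R : M →ₗ[R] ExteriorAlgebra R M))) ^ i := by
    rw [← Submodule.map_pow]
    exact Submodule.mem_map_of_mem hx
  exact key i this

/-- The induced endomorphism of the `i`-th exterior power `Λ^i M`. -/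
noncomputable def extMap {R M : Type*} [CommRing R] [AddCommGroup M] [Module R M]
    (i : ℕ) (T : M →ₗ[R] M) : ⋀[R]^i M →ₗ[R] ⋀[R]^i M :=
  (ExteriorAlgebra.map T).toLinearMap.restrict fun _ hx => map_mem_exteriorPower T i hx

/-- The alternating sum `Σᵢ (−1)^i tr(Λ^i T)`, `0 ≤ i ≤ D`, of the traces of the induced
maps on exterior powers. -/
noncomputable def lamChar (D : ℕ) {V : Type*} [AddCommGroup V] [Module ℂ V]
    (T : V →ₗ[ℂ] V) : ℂ :=
  ∑ i ∈ Finset.range (D + 1), (-1 : ℂ) ^ i * LinearMap.trace ℂ _ (extMap i T)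

/-- The endomorphism of `ℂ^{kn} = (ℂ^k)ⁿ` given by the element `(α, s)` of the wreath
product `Γₙ`, where `s = (1 2 … n)` is the standard `n`-cycle and `α = (g,1,…,1)`:
the composition of the cyclic permutation of the `n` factors with `g` acting on one
factor. -/
noncomputable def cycMap (k n : ℕ) [NeZero n] (g : Matrix (Fin k) (Fin k) ℂ) :
    (Fin n → Fin k → ℂ) →ₗ[ℂ] (Fin n → Fin k → ℂ) where
  toFun v a := if a = 0 then g.mulVec (v (a - 1)) else v (a - 1)
  map_add' u v := by
    funext a
    by_cases h : a = 0 <;> simp [h, Matrix.mulVec_add]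
  map_smul' c v := by
    funext a
    by_cases h : a = 0 <;> simp [h, Matrix.mulVec_smul]

lemma extMap_comp {R M : Type*} [CommRing R] [AddCommGroup M] [Module R M] (i : ℕ) (A B : M →ₗ[R] M) :
    extMap i (A ∘ₗ B) = extMap i A ∘ₗ extMap i B := by
  apply LinearMap.ext; intro x; apply Subtype.ext
  simp only [extMap, LinearMap.restrict_apply, LinearMap.comp_apply]
  show ExteriorAlgebra.map (A ∘ₗ B) (x : ExteriorAlgebra R M) =
    ExteriorAlgebra.map A (ExteriorAlgebra.map B (x : ExteriorAlgebra R M))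
  rw [← ExteriorAlgebra.map_comp_map, AlgHom.comp_apply]

lemma extMap_id {R M : Type*} [CommRing R] [AddCommGroup M] [Module R M] (i : ℕ) : extMap (R := R) (M := M) i LinearMap.id = LinearMap.id := by
  ext x
  simp [extMap, LinearMap.restrict_apply, ExteriorAlgebra.map_id]

lemma map_smul_of_mem_span {R M : Type*} [CommRing R] [AddCommGroup M] [Module R M] (i : ℕ) (c : R) (T : M →ₗ[R] M) (x : ExteriorAlgebra R M)
    (hx : x ∈ Submodule.span R (Set.range (ιMulti R i (M := M)))) :
    ExteriorAlgebra.map (c • T) x = c ^ i • ExteriorAlgebra.map T x := by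
  induction hx using Submodule.span_induction with
  | mem y hy =>
    obtain ⟨v, rfl⟩ := hy
    rw [map_apply_ιMulti, map_apply_ιMulti]
    have : ((c • T) ∘ v) = fun j => c • (T (v j)) := rfl
    rw [this]
    have := (ιMulti R i (M := M)).toMultilinearMap.map_smul_univ (fun _ => c) (fun j => T (v j))
    simp only [MultilinearMap.toFun_eq_coe, AlternatingMap.coe_multilinearMap] at this
    rw [this, Finset.prod_const, Finset.card_univ, Fintype.card_fin]
    rfl
  | zero => simp
  | add y z _ _ hy hz => simp [map_add, hy, hz, smul_add]
  | smul r y _ hy => simp [map_smul, hy, smul_comm r]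

lemma extMap_smul {R M : Type*} [CommRing R] [AddCommGroup M] [Module R M] (i : ℕ) (c : R) (T : M →ₗ[R] M) :
    extMap i (c • T) = c ^ i • extMap i T := by
  apply LinearMap.ext; rintro ⟨x, hx⟩; apply Subtype.ext
  rw [← ιMulti_span_fixedDegree] at hx
  simp only [extMap, LinearMap.restrict_apply, LinearMap.smul_apply, Submodule.coe_smul]
  exact map_smul_of_mem_span i c T x hx


/-- If `i` is not divisible by `n`, then the trace of `(α,s)` acting on the `i`-th
exterior power `Λ^i(ℂ^{kn})` is zero, where `s = (1 2 … n) ∈ Sₙ`, `α = (g,1,…,1)` and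
`g` is an element of `Γ ⊆ GL_k(ℂ)`. -/
theorem trace_extMap_cycMap_eq_zero (k n : ℕ) [NeZero n]
    (g : Matrix.GeneralLinearGroup (Fin k) ℂ) (i : ℕ) (hi : ¬ n ∣ i) :
    LinearMap.trace ℂ _
      (extMap i (cycMap k n (g : Matrix (Fin k) (Fin k) ℂ))) = 0 := by
  by_cases hn1 : n = 1
  · exact absurd (hn1 ▸ one_dvd i) hi
  have hn : 1 < n := lt_of_le_of_ne (Nat.one_le_iff_ne_zero.mpr (NeZero.ne n)) (Ne.symm hn1)
  set T := cycMap k n (g : Matrix (Fin k) (Fin k) ℂ) with hTdef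
  set ζ : ℂ := Complex.exp (2 * Real.pi * Complex.I / n) with hζdef
  have hprim : IsPrimitiveRoot ζ n := Complex.isPrimitiveRoot_exp n (NeZero.ne n)
  have hζn : ζ ^ n = 1 := hprim.pow_eq_one
  have hζ0 : ζ ≠ 0 := Complex.exp_ne_zero _
  have key : ∀ a : Fin n, ζ ^ (a : ℕ) = ζ * ζ ^ ((a - 1 : Fin n) : ℕ) := by
    intro a
    have h1 : ((1 : Fin n) : ℕ) = 1 := by
      rw [Fin.val_one']; exact Nat.mod_eq_of_lt hn
    conv_lhs => rw [show a = a - 1 + 1 by rw [sub_add_cancel]]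
    rw [Fin.val_add, h1, ← pow_eq_pow_mod _ hζn, pow_succ, mul_comm]
  let D : (Fin n → Fin k → ℂ) →ₗ[ℂ] (Fin n → Fin k → ℂ) :=
    { toFun := fun v a => ζ ^ (a : ℕ) • v a
      map_add' := fun u v => by funext a; simp [smul_add]
      map_smul' := fun c v => by
        funext a
        show ζ ^ (a : ℕ) • (c • v a) = c • (ζ ^ (a : ℕ) • v a)
        rw [smul_comm] }
  let E : (Fin n → Fin k → ℂ) →ₗ[ℂ] (Fin n → Fin k → ℂ) :=
    { toFun := fun v a => ζ⁻¹ ^ (a : ℕ) • v a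
      map_add' := fun u v => by funext a; simp [smul_add]
      map_smul' := fun c v => by
        funext a
        show ζ⁻¹ ^ (a : ℕ) • (c • v a) = c • (ζ⁻¹ ^ (a : ℕ) • v a)
        rw [smul_comm] }
  have hED : E ∘ₗ D = LinearMap.id := by
    apply LinearMap.ext; intro v; funext a
    show ζ⁻¹ ^ (a : ℕ) • ζ ^ (a : ℕ) • v a = v a
    rw [smul_smul, inv_pow, inv_mul_cancel₀ (pow_ne_zero _ hζ0), one_smul]
  have hDE : D ∘ₗ E = LinearMap.id := by
    apply LinearMap.ext; intro v; funext a
    show ζ ^ (a : ℕ) • ζ⁻¹ ^ (a : ℕ) • v a = v a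
    rw [smul_smul, inv_pow, mul_inv_cancel₀ (pow_ne_zero _ hζ0), one_smul]
  have hT : ∀ (v : Fin n → Fin k → ℂ) (a : Fin n), T v a =
      if a = 0 then (g : Matrix (Fin k) (Fin k) ℂ).mulVec (v (a - 1)) else v (a - 1) :=
    fun _ _ => rfl
  have hD : ∀ (v : Fin n → Fin k → ℂ) (a : Fin n), D v a = ζ ^ (a : ℕ) • v a := fun _ _ => rfl
  have hconj : D ∘ₗ T = (ζ • T) ∘ₗ D := by
    apply LinearMap.ext; intro v; funext a
    simp only [LinearMap.comp_apply, LinearMap.smul_apply, Pi.smul_apply]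
    rw [hD, hT v a, hT (D v) a, hD v (a - 1)]
    by_cases h : a = 0
    · rw [if_pos h, if_pos h, Matrix.mulVec_smul, smul_smul, ← key a]
    · rw [if_neg h, if_neg h, smul_smul, ← key a]
  have hTeq : (E ∘ₗ (ζ • T)) ∘ₗ D = T := by
    rw [LinearMap.comp_assoc, ← hconj, ← LinearMap.comp_assoc, hED, LinearMap.id_comp]
  have h2 : LinearMap.trace ℂ _ (extMap i T) =
      ζ ^ i * LinearMap.trace ℂ _ (extMap i T) := by
    conv_lhs => rw [← hTeq, extMap_comp, extMap_comp]
    rw [show (extMap i E ∘ₗ extMap i (ζ • T)) ∘ₗ extMap i D =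
        (extMap i E * extMap i (ζ • T)) * extMap i D from rfl]
    rw [LinearMap.trace_mul_comm, ← mul_assoc,
      show extMap i D * extMap i E = extMap i (D ∘ₗ E) from (extMap_comp i D E).symm,
      hDE, extMap_id]
    rw [show LinearMap.id * extMap i (ζ • T) = extMap i (ζ • T) from one_mul _]
    rw [extMap_smul, map_smul, smul_eq_mul]
  have hne : ζ ^ i ≠ 1 := fun hh => hi ((hprim.pow_eq_one_iff_dvd i).mp hh)
  have h3 : (1 - ζ ^ i) * LinearMap.trace ℂ _ (extMap i T) = 0 := by linear_combination h2
  rcases mul_eq_zero.mp h3 with h | h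
  · exact absurd (sub_eq_zero.mp h).symm hne
  · exact h
end
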